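/- Let X : ℝⁿ → ℝⁿ be a continuously differentiable vector field and define H_X(x) = ∫₀¹ ⟨X(t·x), x⟩ dt. Then the vector field u := X − ∇H_X satisfies ⟨u(x), x⟩ = 0 for all x ∈ ℝⁿ, so that X decomposes as X = ∇H_X + u with a conservative part and a part orthogonal to the radial direction (sphere-invariant part), and moreover H_X(0) = 0. -/

import Mathlib

/-!
Substituting `r = s t` gives `H_X (s • x) = ∫₀ˢ ⟪X (r • x), x⟫ dr`, so by the fundamental theorem
of calculus the radial derivative `⟪∇H_X x, x⟫ = d/ds H_X (s • x) |_{s=1}` equals `⟪X x, x⟫`.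
This needs `H_X` to be differentiable (otherwise Mathlib's `gradient` is `0`), which follows by
differentiating under the integral sign: the integrand `(x, t) ↦ ⟪X (t • x), x⟫` is jointly `C¹`,
so its partial derivative is bounded on compact neighbourhoods.
-/

open RealInnerProductSpace intervalIntegral Function Set

section ParametricIntegral

variable {E F : Type*} [NormedAddCommGroup E] [NormedSpace ℝ E] [ProperSpace E]
  [NormedAddCommGroup F] [NormedSpace ℝ F]

theorem hasFDerivAt_intervalIntegral_of_contDiff {f : E → ℝ → F} (hf : ContDiff ℝ 1 (uncurry f))
    (a b : ℝ) (x₀ : E) :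
    HasFDerivAt (fun x => ∫ t in a..b, f x t)
      (∫ t in a..b, (fderiv ℝ (uncurry f) (x₀, t)).comp (.inl ℝ E ℝ)) x₀ := by
  set f' : E → ℝ → E →L[ℝ] F := fun x t => (fderiv ℝ (uncurry f) (x, t)).comp (.inl ℝ E ℝ)
  have hf'_cont : Continuous (uncurry f') :=
    (hf.continuous_fderiv one_ne_zero).clm_comp continuous_const
  have hf_slice (x : E) : Continuous (f x) := hf.continuous.comp (.prodMk_right x)
  obtain ⟨C, hC⟩ := ((isCompact_closedBall x₀ 1).prod isCompact_uIcc).exists_bound_of_continuousOn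
    hf'_cont.continuousOn
  refine hasFDerivAt_integral_of_dominated_of_fderiv_le (F' := f') (bound := fun _ => C)
    (Metric.ball_mem_nhds x₀ one_pos) (.of_forall fun x => (hf_slice x).aestronglyMeasurable)
    ((hf_slice x₀).intervalIntegrable a b)
    (hf'_cont.comp (.prodMk_right x₀)).aestronglyMeasurable ?_ intervalIntegrable_const ?_
  · exact .of_forall fun t ht x hx =>
      hC (x, t) ⟨Metric.ball_subset_closedBall hx, uIoc_subset_uIcc ht⟩
  · refine .of_forall fun t _ x _ => ?_
    exact ((hf.differentiable one_ne_zero (x, t)).hasFDerivAt).comp x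
      (hasFDerivAt_prodMk_left (𝕜 := ℝ) x t)

end ParametricIntegral

section Presnov

variable {E : Type*} [NormedAddCommGroup E] [InnerProductSpace ℝ E]

noncomputable def presnovPotential (X : E → E) (x : E) : ℝ :=
  ∫ t in (0 : ℝ)..1, ⟪X (t • x), x⟫

theorem presnovPotential_smul (X : E → E) (s : ℝ) (x : E) :
    presnovPotential X (s • x) = ∫ r in (0 : ℝ)..s, ⟪X (r • x), x⟫ := by
  have := smul_integral_comp_mul_left (fun r : ℝ => ⟪X (r • x), x⟫) (a := 0) (b := 1) s
  simpa [presnovPotential, smul_smul, inner_smul_right, mul_comm] using this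

theorem hasDerivAt_presnovPotential_smul {X : E → E} (hX : Continuous X) (s : ℝ) (x : E) :
    HasDerivAt (fun s : ℝ => presnovPotential X (s • x)) ⟪X (s • x), x⟫ s := by
  simp only [presnovPotential_smul]
  exact ((hX.comp (continuous_id.smul continuous_const)).inner continuous_const
    ).integral_hasStrictDerivAt 0 s |>.hasDerivAt

theorem differentiable_presnovPotential [ProperSpace E] {X : E → E} (hX : ContDiff ℝ 1 X) :
    Differentiable ℝ (presnovPotential X) := fun x =>
  (hasFDerivAt_intervalIntegral_of_contDiff (f := fun x t => ⟪X (t • x), x⟫)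
    ((hX.comp (contDiff_snd.smul contDiff_fst)).inner ℝ contDiff_fst) 0 1 x).differentiableAt

theorem inner_gradient_presnovPotential_self [ProperSpace E] {X : E → E} (hX : ContDiff ℝ 1 X)
    (x : E) : ⟪gradient (presnovPotential X) x, x⟫ = ⟪X x, x⟫ := by
  have hline : HasDerivAt (fun s : ℝ => s • x) x 1 := by
    simpa using (hasDerivAt_id (1 : ℝ)).smul_const x
  have hradial := (differentiable_presnovPotential hX x).hasFDerivAt.comp_hasDerivAt_of_eq 1
    hline (one_smul ℝ x).symm
  have hpotential := hasDerivAt_presnovPotential_smul hX.continuous 1 x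
  rw [one_smul] at hpotential
  rw [gradient, InnerProductSpace.toDual_symm_apply]
  exact hradial.unique hpotential

end Presnov

/-- **Presnov decomposition**: for a `C¹` vector field `X` on `ℝⁿ` with Presnov
potential `H_X x = ∫₀¹ ⟪X (t • x), x⟫ dt`, the part `u = X - ∇H_X` is orthogonal to
the radial direction, and `H_X 0 = 0`. -/
theorem presnov_decomposition
    {n : ℕ} (X : EuclideanSpace ℝ (Fin n) → EuclideanSpace ℝ (Fin n))
    (hX : ContDiff ℝ 1 X)
    (H : EuclideanSpace ℝ (Fin n) → ℝ)
    (hH : ∀ x, H x = ∫ t in (0:ℝ)..1, ⟪X (t • x), x⟫)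
    (u : EuclideanSpace ℝ (Fin n) → EuclideanSpace ℝ (Fin n))
    (hu : ∀ x, u x = X x - gradient H x) :
    (∀ x, ⟪u x, x⟫ = 0) ∧ (∀ x, X x = gradient H x + u x) ∧ H 0 = 0 := by
  obtain rfl : H = presnovPotential X := funext hH
  refine ⟨fun x => ?_, fun x => ?_, by simp [presnovPotential]⟩
  · rw [hu, inner_sub_left, inner_gradient_presnovPotential_self hX, sub_self]
  · rw [hu, add_sub_cancel]
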